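/- arXiv:math/0110230 — 4 statements merged into one kernel-verified Lean document; each statement's English description precedes it below -/
import Mathlib

section
/- Let M be an unstable module over the mod-2 Steenrod algebra and h ≥ 0. The set of elements x ∈ M such that for every k with 0 ≤ k ≤ h there exists an integer c_k with (Sq_k)^{c_k} x = 0 is a sub-A-module of M. -/
/-- An *unstable module* over the mod-2 Steenrod algebra, presented by its graded
pieces, the Steenrod square operations `Sq^i : M^n → M^{n+i}`, and the
instability condition `Sq^i x = 0` for `i > deg x`. -/
structure USM where
  M : ℕ → Type
  inst : ∀ n, AddCommGroup (M n)
  sq : ∀ (i n : ℕ), M n → M (n + i)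
  sq_add : ∀ i n (x y : M n), sq i n (x + y) = sq i n x + sq i n y
  sq_zero : ∀ i n, sq i n (0 : M n) = 0
  sq0_id : ∀ n (x : M n), sq 0 n x = x
  instab : ∀ i n (x : M n), n < i → sq i n x = 0
  char2 : ∀ n (x : M n), x + x = 0

attribute [instance] USM.inst

namespace USM

variable (A : USM)

/-- Degree-cast. -/
def castM {m n : ℕ} (h : m = n) (x : A.M m) : A.M n := h ▸ x

/-- The (homogeneous) elements of `A`, together with their degree. -/
def El := Σ n, A.M n

/-- `Sq^i` on elements. -/
def sqEl (i : ℕ) (x : A.El) : A.El := ⟨x.1 + i, A.sq i x.1 x.2⟩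

/-- The lower-indexed operation `Sq_k x = Sq^{|x|-k} x` (zero when `k > |x|`). -/
def sqLow (k : ℕ) (x : A.El) : A.El :=
  if k ≤ x.1 then ⟨x.1 + (x.1 - k), A.sq (x.1 - k) x.1 x.2⟩ else ⟨x.1, 0⟩

/-- An element is zero. -/
def IsZeroEl (x : A.El) : Prop := x.2 = 0

/-- `x` lies in the largest `s`-nilpotent submodule `M_s` of `M`: every
iterated operation `(Sq_k)^c`, `k < s`, eventually vanishes on `x`
(Proposition 1.4 of the paper, originally the definition of nilpotency in [6]). -/
def NilElem (s : ℕ) (x : A.El) : Prop :=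
  ∀ k < s, ∃ c : ℕ, A.IsZeroEl ((A.sqLow k)^[c] x)

/-- `A` belongs to `Nil_s`: it is (at least) `s`-nilpotent. -/
def IsNil (s : ℕ) : Prop := ∀ x : A.El, A.NilElem s x

/-- `A` is reduced: it contains no nontrivial suspension, equivalently
`Sq₀ = (x ↦ Sq^{|x|} x)` is injective. -/
def Reduced : Prop := ∀ n (x : A.M n), A.sq n n x = 0 → x = 0

/-- Applying a composite Steenrod operation `Sq^{i₁} Sq^{i₂} ⋯` to an element. -/
def applyList : List ℕ → A.El → A.El
  | [], x => x
  | i :: L, x => A.sqEl i (applyList L x)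

/-- `A` is *locally finite*: every element generates a finite submodule over the
Steenrod algebra; equivalently (the Steenrod algebra being finite in each degree)
for every `x` all composite Steenrod operations of sufficiently large total
degree vanish on `x`. -/
def LocFinite : Prop :=
  ∀ x : A.El, ∃ N : ℕ, ∀ L : List ℕ, N ≤ L.sum → A.IsZeroEl (A.applyList L x)

end USM

/-- A morphism of unstable modules. -/
structure USMHom (A B : USM) where
  f : ∀ n, A.M n → B.M n
  map_add : ∀ n (x y : A.M n), f n (x + y) = f n x + f n y
  map_sq : ∀ i n (x : A.M n), f (n + i) (A.sq i n x) = B.sq i n (f n x)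

/-- The Adem relations hold in `A` (for `0 < a < 2b`):
`Sq^a Sq^b = Σ_{i≤a/2} C(b-1-i, a-2i) Sq^{a+b-i} Sq^i` modulo 2. -/
def USM.AdemHolds (A : USM) : Prop :=
  ∀ (a b n : ℕ) (x : A.M n), 0 < a → a < 2 * b →
    A.sq a (n + b) (A.sq b n x) =
      ∑ i ∈ (Finset.range (a / 2 + 1)).attach,
        if Nat.choose (b - 1 - i.1) (a - 2 * i.1) % 2 = 1 then
          A.castM (by have := Finset.mem_range.mp i.2; omega)
            (A.sq (a + b - i.1) (n + i.1) (A.sq i.1 n x))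
        else 0

/-!
Call `x` `Sq_k`-nilpotent if some iterate of `Sq_k` kills it. On each degree the iterates of
`Sq_k` are additive, so `Sq_k`-nilpotent elements of a given degree form a subgroup; this gives
closure under addition and lets Adem relations be used term by term.

For closure under `Sq^j`, induct on `k ≤ h` to show that every monomial `v = Sq^I x` is
`Sq_k`-nilpotent, knowing that all monomials are `Sq_{k'}`-nilpotent for `k' < k`. Write
`Sq^j v = Sq_κ v` with `κ = |v| - j`. The case `κ = k` is immediate. If `κ < k`, the Adem
relation for `Sq_k Sq_κ v = Sq^{2|v|-κ-k} Sq^{|v|-κ} v` has terms `Sq_{κ'} Sq^i v` with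
`κ' < κ`, or with `κ' = κ` and `Sq^i v = Sq_{(k+κ)/2} v`; induct on `κ` and on the
`Sq_{(k+κ)/2}`-nilpotency index of `v`. If `κ > k`, the Adem relation for
`Sq^{2(|v|-κ)} Sq_k v = Sq_{2κ-k} Sq_k v` contains `Sq_k Sq_κ v` once, the other terms being
`Sq_{κ'}` of monomials with `κ' < k`; induct on the `Sq_k`-nilpotency index of `v`.
-/

namespace USM

variable (A : USM)

def sqHom (i n : ℕ) : A.M n →+ A.M (n + i) := AddMonoidHom.mk' (A.sq i n) (A.sq_add i n)

def IsSqLowNilpotent (k : ℕ) (x : A.El) : Prop :=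
  ∃ c : ℕ, A.IsZeroEl ((A.sqLow k)^[c] x)

variable {A}

theorem isZeroEl_mk {n : ℕ} {w : A.M n} : A.IsZeroEl ⟨n, w⟩ ↔ w = 0 := Iff.rfl

theorem sqEl_fst (i : ℕ) (x : A.El) : (A.sqEl i x).1 = x.1 + i := rfl

theorem sqLow_of_le {k : ℕ} {x : A.El} (h : k ≤ x.1) : A.sqLow k x = A.sqEl (x.1 - k) x :=
  if_pos h

theorem sqLow_of_lt {k : ℕ} {x : A.El} (h : x.1 < k) : A.sqLow k x = ⟨x.1, 0⟩ :=
  if_neg (not_le.2 h)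

theorem sqEl_of_le {j : ℕ} {x : A.El} (h : j ≤ x.1) : A.sqEl j x = A.sqLow (x.1 - j) x := by
  rw [sqLow_of_le (Nat.sub_le _ _), Nat.sub_sub_self h]

theorem isZeroEl_sqEl_of_lt {j : ℕ} {x : A.El} (h : x.1 < j) : A.IsZeroEl (A.sqEl j x) :=
  A.instab j x.1 x.2 h

theorem sqLow_fst_self (x : A.El) : A.sqLow x.1 x = x := by
  rw [sqLow_of_le le_rfl, Nat.sub_self]
  exact congrArg (Sigma.mk x.1) (A.sq0_id x.1 x.2)

theorem exists_addMonoidHom_iterate_sqLow (k : ℕ) : ∀ c n : ℕ,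
    ∃ (m : ℕ) (f : A.M n →+ A.M m), ∀ w, (A.sqLow k)^[c] ⟨n, w⟩ = ⟨m, f w⟩
  | 0, n => ⟨n, AddMonoidHom.id _, fun _ => rfl⟩
  | c + 1, n => by
    by_cases hk : k ≤ n
    · obtain ⟨m, f, hf⟩ := exists_addMonoidHom_iterate_sqLow k c (n + (n - k))
      exact ⟨m, f.comp (A.sqHom (n - k) n), fun w =>
        (congrArg (A.sqLow k)^[c] (sqLow_of_le (x := ⟨n, w⟩) hk)).trans (hf _)⟩
    · obtain ⟨m, f, hf⟩ := exists_addMonoidHom_iterate_sqLow k c n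
      exact ⟨m, 0, fun w =>
        (congrArg (A.sqLow k)^[c] (sqLow_of_lt (x := ⟨n, w⟩) (not_le.1 hk))).trans
          ((hf 0).trans (by rw [map_zero]; rfl))⟩

theorem isZeroEl_iterate_sqLow {k c : ℕ} {x : A.El} (hx : A.IsZeroEl x) :
    A.IsZeroEl ((A.sqLow k)^[c] x) := by
  obtain ⟨n, w⟩ := x
  obtain ⟨m, f, hf⟩ := exists_addMonoidHom_iterate_sqLow k c n
  rw [isZeroEl_mk] at hx
  rw [hf, hx, isZeroEl_mk, map_zero]

theorem isZeroEl_sqLow {k : ℕ} {x : A.El} (hx : A.IsZeroEl x) : A.IsZeroEl (A.sqLow k x) :=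
  isZeroEl_iterate_sqLow (c := 1) hx

theorem isZeroEl_iterate_sqLow_of_le {k c c' : ℕ} {x : A.El}
    (h : A.IsZeroEl ((A.sqLow k)^[c] x)) (hc : c ≤ c') : A.IsZeroEl ((A.sqLow k)^[c'] x) := by
  rw [← Nat.sub_add_cancel hc, Function.iterate_add_apply]
  exact isZeroEl_iterate_sqLow h

namespace IsSqLowNilpotent

theorem of_isZeroEl {k : ℕ} {x : A.El} (hx : A.IsZeroEl x) : A.IsSqLowNilpotent k x := ⟨0, hx⟩

theorem of_sqLow {k : ℕ} {x : A.El} (h : A.IsSqLowNilpotent k (A.sqLow k x)) :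
    A.IsSqLowNilpotent k x :=
  let ⟨c, hc⟩ := h
  ⟨c + 1, by rwa [Function.iterate_succ_apply]⟩

theorem sqLow {k : ℕ} {x : A.El} (h : A.IsSqLowNilpotent k x) :
    A.IsSqLowNilpotent k (A.sqLow k x) :=
  let ⟨c, hc⟩ := h
  ⟨c, by rw [← Function.iterate_succ_apply]; exact isZeroEl_iterate_sqLow_of_le hc c.le_succ⟩

theorem isZeroEl_of_fst {x : A.El} (h : A.IsSqLowNilpotent x.1 x) : A.IsZeroEl x :=
  let ⟨c, hc⟩ := h
  Function.iterate_fixed (sqLow_fst_self x) c ▸ hc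

theorem induction {s : ℕ} {P : A.El → Prop} (zero : ∀ x, A.IsZeroEl x → P x)
    (step : ∀ x, A.IsSqLowNilpotent s x → P (A.sqLow s x) → P x) {x : A.El}
    (h : A.IsSqLowNilpotent s x) : P x := by
  obtain ⟨c, hc⟩ := h
  induction c generalizing x with
  | zero => exact zero x hc
  | succ c ih =>
    rw [Function.iterate_succ_apply] at hc
    exact step x (of_sqLow ⟨c, hc⟩) (ih hc)

end IsSqLowNilpotent

theorem isSqLowNilpotent_sqEl {k j : ℕ} {x : A.El}
    (h : j ≤ x.1 → A.IsSqLowNilpotent k (A.sqLow (x.1 - j) x)) :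
    A.IsSqLowNilpotent k (A.sqEl j x) := by
  rcases le_or_gt j x.1 with hj | hj
  · rw [sqEl_of_le hj]; exact h hj
  · exact .of_isZeroEl (isZeroEl_sqEl_of_lt hj)

variable (A) in
def sqLowNilpotentSubgroup (k n : ℕ) : AddSubgroup (A.M n) where
  carrier := {w | A.IsSqLowNilpotent k ⟨n, w⟩}
  zero_mem' := .of_isZeroEl rfl
  add_mem' := by
    rintro w₁ w₂ ⟨c₁, h₁⟩ ⟨c₂, h₂⟩
    obtain ⟨m, f, hf⟩ := exists_addMonoidHom_iterate_sqLow k (max c₁ c₂) n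
    have e₁ := isZeroEl_iterate_sqLow_of_le h₁ (le_max_left c₁ c₂)
    have e₂ := isZeroEl_iterate_sqLow_of_le h₂ (le_max_right c₁ c₂)
    rw [hf, isZeroEl_mk] at e₁ e₂
    exact ⟨max c₁ c₂, by rw [hf, isZeroEl_mk, map_add, e₁, e₂, add_zero]⟩
  neg_mem' := by
    rintro w ⟨c, hc⟩
    obtain ⟨m, f, hf⟩ := exists_addMonoidHom_iterate_sqLow k c n
    rw [hf, isZeroEl_mk] at hc
    exact ⟨c, by rw [hf, isZeroEl_mk, map_neg, hc, neg_zero]⟩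

theorem castM_mem_sqLowNilpotentSubgroup {k m n : ℕ} (h : m = n) {w : A.M m} :
    A.castM h w ∈ A.sqLowNilpotentSubgroup k n ↔ A.IsSqLowNilpotent k ⟨m, w⟩ := by
  subst h; rfl

theorem isSqLowNilpotent_sqEl_sqEl_of_adem (hA : A.AdemHolds) {k a b : ℕ} (ha : 0 < a)
    (hab : a < 2 * b) (x : A.El)
    (H : ∀ i ≤ a / 2, A.IsSqLowNilpotent k (A.sqEl (a + b - i) (A.sqEl i x))) :
    A.IsSqLowNilpotent k (A.sqEl a (A.sqEl b x)) := by
  change A.sq a (x.1 + b) (A.sq b x.1 x.2) ∈ A.sqLowNilpotentSubgroup k (x.1 + b + a)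
  rw [hA a b x.1 x.2 ha hab]
  refine sum_mem fun i _ => ?_
  split_ifs
  · exact (castM_mem_sqLowNilpotentSubgroup _).2
      (H i (Nat.lt_succ_iff.1 (Finset.mem_range.1 i.2)))
  · exact zero_mem _

theorem isSqLowNilpotent_sqEl_add_sqEl_of_adem (hA : A.AdemHolds) {k i b : ℕ} (hi : 0 < i)
    (hib : i < b) (x : A.El) (hlhs : A.IsSqLowNilpotent k (A.sqEl (2 * i) (A.sqEl b x)))
    (H : ∀ j < i, A.IsSqLowNilpotent k (A.sqEl (2 * i + b - j) (A.sqEl j x))) :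
    A.IsSqLowNilpotent k (A.sqEl (i + b) (A.sqEl i x)) := by
  have hi_mem : i ∈ Finset.range (2 * i / 2 + 1) := Finset.mem_range.2 (by omega)
  have hadem := hA (2 * i) b x.1 x.2 (by omega) (by omega)
  rw [← Finset.add_sum_erase _ _ (Finset.mem_attach _ ⟨i, hi_mem⟩)] at hadem
  change A.sq (2 * i) (x.1 + b) (A.sq b x.1 x.2) ∈ A.sqLowNilpotentSubgroup k _ at hlhs
  rw [hadem] at hlhs
  have htop := (add_mem_cancel_right (sum_mem fun j hj => ?_)).1 hlhs
  · rw [if_pos (by simp), castM_mem_sqLowNilpotentSubgroup] at htop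
    rwa [show 2 * i + b - i = i + b by omega] at htop
  · have hji : j.1 < i := by
      have := Finset.mem_range.1 j.2
      have : j.1 ≠ i := Subtype.coe_injective.ne (Finset.ne_of_mem_erase hj)
      omega
    split_ifs
    · exact (castM_mem_sqLowNilpotentSubgroup _).2 (H j hji)
    · exact zero_mem _

theorem isSqLowNilpotent_sqLow_of_lt_step (hA : A.AdemHolds) {S : Set A.El}
    (hS : ∀ i, ∀ x ∈ S, A.sqEl i x ∈ S) {k κ : ℕ}
    (H : ∀ k' < k, ∀ x ∈ S, A.IsSqLowNilpotent k' x) (hκk : κ < k)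
    (IH : ∀ κ' < κ, ∀ x ∈ S, A.IsSqLowNilpotent k (A.sqLow κ' x)) {x : A.El} (hx : x ∈ S)
    (hκx : κ ≤ x.1)
    (hnext : A.sqLow ((k + κ) / 2) x ∈ S →
      A.IsSqLowNilpotent k (A.sqLow κ (A.sqLow ((k + κ) / 2) x))) :
    A.IsSqLowNilpotent k (A.sqLow κ x) := by
  rw [sqLow_of_le hκx]
  rcases lt_trichotomy (x.1 + (x.1 - κ)) k with hlt | heq | hgt
  · exact .of_sqLow (.of_isZeroEl (by rw [sqLow_of_lt (x := A.sqEl _ x) hlt]; rfl))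
  · have hx0 : A.IsZeroEl x := (H x.1 (by omega) x hx).isZeroEl_of_fst
    exact .of_isZeroEl (by rw [← sqLow_of_le hκx]; exact isZeroEl_sqLow hx0)
  apply IsSqLowNilpotent.of_sqLow
  rw [sqLow_of_le (x := A.sqEl _ x) hgt.le, sqEl_fst]
  refine isSqLowNilpotent_sqEl_sqEl_of_adem hA (by omega) (by omega) x fun i hi =>
    isSqLowNilpotent_sqEl fun hle => ?_
  rw [sqEl_fst] at hle ⊢
  rcases (show x.1 + i - (x.1 + (x.1 - κ) - k + (x.1 - κ) - i) ≤ κ by omega).lt_or_eq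
    with hlt | heq
  · exact IH _ hlt _ (hS i x hx)
  · have hnext_eq : A.sqLow ((k + κ) / 2) x = A.sqEl i x := by
      rw [sqLow_of_le (by omega), show x.1 - (k + κ) / 2 = i by omega]
    rw [heq, ← hnext_eq]
    exact hnext (hnext_eq ▸ hS i x hx)

theorem isSqLowNilpotent_sqLow_of_lt (hA : A.AdemHolds) {S : Set A.El}
    (hS : ∀ i, ∀ x ∈ S, A.sqEl i x ∈ S) {k : ℕ}
    (H : ∀ k' < k, ∀ x ∈ S, A.IsSqLowNilpotent k' x) :
    ∀ κ < k, ∀ x ∈ S, A.IsSqLowNilpotent k (A.sqLow κ x) := by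
  intro κ
  induction κ using Nat.strong_induction_on with
  | _ κ IH =>
  intro hκk x hx
  refine IsSqLowNilpotent.induction (s := (k + κ) / 2)
    (P := fun y => y ∈ S → A.IsSqLowNilpotent k (A.sqLow κ y))
    (fun y hy _ => .of_isZeroEl (isZeroEl_sqLow hy)) (fun y _ hnext hy => ?_)
    (H _ (by omega) x hx) hx
  rcases lt_or_ge y.1 κ with hyκ | hκy
  · exact .of_isZeroEl (by rw [sqLow_of_lt hyκ]; rfl)
  · exact isSqLowNilpotent_sqLow_of_lt_step hA hS H hκk
      (fun κ' hκ' => IH κ' hκ' (hκ'.trans hκk)) hy hκy hnext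

theorem isSqLowNilpotent_sqLow_of_gt_step (hA : A.AdemHolds) {S : Set A.El}
    (hS : ∀ i, ∀ x ∈ S, A.sqEl i x ∈ S) {k κ : ℕ}
    (H : ∀ k' < k, ∀ x ∈ S, A.IsSqLowNilpotent k' x) (hkκ : k < κ) {x : A.El} (hx : x ∈ S)
    (hκx : κ < x.1) (hnext : A.IsSqLowNilpotent k (A.sqLow (2 * κ - k) (A.sqLow k x))) :
    A.IsSqLowNilpotent k (A.sqLow κ x) := by
  apply IsSqLowNilpotent.of_sqLow
  -- `Sq_k Sq_κ x` is the top term of the Adem relation for `Sq^{2(|x|-κ)} Sq^{|x|-k} x`.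
  rw [sqLow_of_le hκx.le, sqLow_of_le (x := A.sqEl _ x) (by rw [sqEl_fst]; omega), sqEl_fst,
    show x.1 + (x.1 - κ) - k = (x.1 - κ) + (x.1 - k) by omega]
  refine isSqLowNilpotent_sqEl_add_sqEl_of_adem hA (by omega) (by omega) x ?_ fun j hj =>
    isSqLowNilpotent_sqEl fun hle => ?_
  · rwa [sqLow_of_le (x := x) (by omega), sqLow_of_le (x := A.sqEl _ x) (by rw [sqEl_fst]; omega),
      sqEl_fst, show x.1 + (x.1 - k) - (2 * κ - k) = 2 * (x.1 - κ) by omega] at hnext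
  · rw [sqEl_fst] at hle ⊢
    exact isSqLowNilpotent_sqLow_of_lt hA hS H _ (by omega) _ (hS j x hx)

theorem isSqLowNilpotent_sqLow_of_gt (hA : A.AdemHolds) {S : Set A.El}
    (hS : ∀ i, ∀ x ∈ S, A.sqEl i x ∈ S) {k : ℕ}
    (H : ∀ k' < k, ∀ x ∈ S, A.IsSqLowNilpotent k' x) {x : A.El} (hx : x ∈ S)
    (hxk : A.IsSqLowNilpotent k x) : ∀ κ > k, A.IsSqLowNilpotent k (A.sqLow κ x) := by
  refine IsSqLowNilpotent.induction
    (P := fun y => y ∈ S → ∀ κ > k, A.IsSqLowNilpotent k (A.sqLow κ y))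
    (fun y hy _ _ _ => .of_isZeroEl (isZeroEl_sqLow hy)) (fun y hyk hnext hy κ hκ => ?_) hxk hx
  rcases lt_trichotomy κ y.1 with hκy | rfl | hyκ
  · have hnext_mem : A.sqLow k y ∈ S := by rw [sqLow_of_le (by omega)]; exact hS _ y hy
    exact isSqLowNilpotent_sqLow_of_gt_step hA hS H hκ hy hκy (hnext hnext_mem _ (by omega))
  · rwa [sqLow_fst_self]
  · exact .of_isZeroEl (by rw [sqLow_of_lt hyκ]; rfl)

theorem IsSqLowNilpotent.sqEl_of_mem (hA : A.AdemHolds) {S : Set A.El}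
    (hS : ∀ i, ∀ x ∈ S, A.sqEl i x ∈ S) {k : ℕ}
    (H : ∀ k' < k, ∀ x ∈ S, A.IsSqLowNilpotent k' x) {x : A.El} (hx : x ∈ S)
    (hxk : A.IsSqLowNilpotent k x) (j : ℕ) : A.IsSqLowNilpotent k (A.sqEl j x) := by
  refine isSqLowNilpotent_sqEl fun _ => ?_
  rcases lt_trichotomy (x.1 - j) k with hlt | heq | hgt
  · exact isSqLowNilpotent_sqLow_of_lt hA hS H _ hlt x hx
  · exact heq ▸ hxk.sqLow
  · exact isSqLowNilpotent_sqLow_of_gt hA hS H hx hxk _ hgt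

theorem isSqLowNilpotent_applyList (hA : A.AdemHolds) {h : ℕ} {x : A.El}
    (hx : ∀ k ≤ h, A.IsSqLowNilpotent k x) (k : ℕ) (hk : k ≤ h) (L : List ℕ) :
    A.IsSqLowNilpotent k (A.applyList L x) := by
  induction k using Nat.strong_induction_on generalizing L with
  | _ k IH =>
  let S := Set.range (A.applyList · x)
  have hS : ∀ i, ∀ y ∈ S, A.sqEl i y ∈ S := by
    rintro i _ ⟨L, rfl⟩
    exact ⟨i :: L, rfl⟩
  have H : ∀ k' < k, ∀ y ∈ S, A.IsSqLowNilpotent k' y := by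
    rintro k' hk' _ ⟨L, rfl⟩
    exact IH k' hk' (by omega) L
  induction L with
  | nil => exact hx k hk
  | cons j L ih => exact ih.sqEl_of_mem hA hS H ⟨L, rfl⟩ j

end USM

/-- Proposition 6.1 of the paper.  In an unstable module `A`
satisfying the Adem relations, for any `h ≥ 0` the set of elements `x` such
that for every `0 ≤ k ≤ h` some iterate `(Sq_k)^{c_k}` vanishes on `x` is a
sub-`A`-module of `A`: it is stable under all Steenrod operations (and under
addition). -/
theorem sqLow_nilpotent_set_is_submodule (A : USM) (hA : A.AdemHolds) (h : ℕ) :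
    (∀ x : A.El, (∀ k ≤ h, ∃ c : ℕ, A.IsZeroEl ((A.sqLow k)^[c] x)) →
      ∀ i : ℕ, ∀ k ≤ h, ∃ c : ℕ, A.IsZeroEl ((A.sqLow k)^[c] (A.sqEl i x))) ∧
    (∀ n (x y : A.M n),
      (∀ k ≤ h, ∃ c : ℕ, A.IsZeroEl ((A.sqLow k)^[c] (⟨n, x⟩ : A.El))) →
      (∀ k ≤ h, ∃ c : ℕ, A.IsZeroEl ((A.sqLow k)^[c] (⟨n, y⟩ : A.El))) →
      (∀ k ≤ h, ∃ c : ℕ, A.IsZeroEl ((A.sqLow k)^[c] (⟨n, x + y⟩ : A.El)))) :=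
  ⟨fun _ hx i k hk => USM.isSqLowNilpotent_applyList hA hx k hk [i],
    fun n _ _ hx hy k hk => (A.sqLowNilpotentSubgroup k n).add_mem (hx k hk) (hy k hk)⟩
end

section
/- Let M be an unstable module, k ≥ 1 an integer, and suppose there is a short exact sequence 0 → K → M → N → 0 of unstable modules with K ∈ Nil_k. Then for every s < k the natural map R_s(M) → R_s(N) is an isomorphism. -/
/-!
A morphism of unstable modules commutes with every `Sq_j`. So if `(Sq_j)^c` kills the image of
`x` in `N`, then `(Sq_j)^c x` lies in the kernel, i.e. comes from `K`; when `j < k`, a further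
iterate of `Sq_j` kills it there, because `K` is `k`-nilpotent. Hence for `s ≤ k` an element of `M`
lies in `M_s` as soon as its image lies in `N_s`, which gives both injectivity and surjectivity
of `M_s/M_{s+1} → N_s/N_{s+1}` for `s < k`.
-/

namespace USM

variable {A : USM}

lemma NilElem.mono {s t : ℕ} {x : A.El} (hx : A.NilElem t x) (hst : s ≤ t) : A.NilElem s x :=
  fun j hj => hx j (lt_of_lt_of_le hj hst)

lemma IsNil.mono {s t : ℕ} (hA : A.IsNil t) (hst : s ≤ t) : A.IsNil s :=
  fun x => (hA x).mono hst

lemma nilElem_zero (s n : ℕ) : A.NilElem s ⟨n, 0⟩ :=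
  fun _ _ => ⟨0, rfl⟩

end USM

namespace USMHom

variable {A B : USM} (φ : USMHom A B)

def el (x : A.El) : B.El := ⟨x.1, φ.f x.1 x.2⟩

lemma map_zero (n : ℕ) : φ.f n (0 : A.M n) = 0 :=
  left_eq_add.mp (by simpa only [add_zero] using φ.map_add n 0 0)

lemma el_sqLow (j : ℕ) (x : A.El) : φ.el (A.sqLow j x) = B.sqLow j (φ.el x) := by
  obtain ⟨n, x⟩ := x
  show φ.el (A.sqLow j ⟨n, x⟩) = B.sqLow j ⟨n, φ.f n x⟩
  unfold USM.sqLow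
  by_cases h : j ≤ n
  · simp only [h, ↓reduceIte]
    exact congrArg (Sigma.mk _) (φ.map_sq _ n x)
  · simp only [h, ↓reduceIte]
    exact congrArg (Sigma.mk _) (φ.map_zero n)

lemma el_iterate_sqLow (j c : ℕ) (x : A.El) :
    φ.el ((A.sqLow j)^[c] x) = (B.sqLow j)^[c] (φ.el x) :=
  (Function.Semiconj.iterate_right (φ.el_sqLow j) c) x

lemma isZeroEl_el {x : A.El} (h : A.IsZeroEl x) : B.IsZeroEl (φ.el x) := by
  unfold USM.IsZeroEl at h ⊢
  show φ.f x.1 x.2 = 0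
  rw [h, φ.map_zero]

end USMHom

section Extension

variable {K M N : USM} (g : USMHom K M) (f : USMHom M N)

lemma exists_iterate_sqLow_isZeroEl_of_isZeroEl_el
    (hker : ∀ n (x : M.M n), f.f n x = 0 → ∃ w : K.M n, g.f n w = x) {j : ℕ}
    (hK : ∀ w : K.El, ∃ c, K.IsZeroEl ((K.sqLow j)^[c] w)) :
    ∀ x : M.El, N.IsZeroEl (f.el x) → ∃ c, M.IsZeroEl ((M.sqLow j)^[c] x) := by
  rintro ⟨n, x⟩ hx
  obtain ⟨w, rfl⟩ := hker n x hx
  obtain ⟨c, hc⟩ := hK ⟨n, w⟩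
  exact ⟨c, g.el_iterate_sqLow j c ⟨n, w⟩ ▸ g.isZeroEl_el hc⟩

lemma exists_iterate_sqLow_isZeroEl_of_map
    (hker : ∀ n (x : M.M n), f.f n x = 0 → ∃ w : K.M n, g.f n w = x) {j : ℕ}
    (hK : ∀ w : K.El, ∃ c, K.IsZeroEl ((K.sqLow j)^[c] w)) (x : M.El)
    (hx : ∃ c, N.IsZeroEl ((N.sqLow j)^[c] (f.el x))) :
    ∃ c, M.IsZeroEl ((M.sqLow j)^[c] x) := by
  obtain ⟨c, hc⟩ := hx
  rw [← f.el_iterate_sqLow] at hc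
  obtain ⟨c', hc'⟩ := exists_iterate_sqLow_isZeroEl_of_isZeroEl_el g f hker hK _ hc
  exact ⟨c' + c, by rwa [Function.iterate_add_apply]⟩

lemma nilElem_of_nilElem_map
    (hker : ∀ n (x : M.M n), f.f n x = 0 → ∃ w : K.M n, g.f n w = x) {s : ℕ}
    (hK : K.IsNil s) {x : M.El} (hx : N.NilElem s (f.el x)) : M.NilElem s x :=
  fun j hj => exists_iterate_sqLow_isZeroEl_of_map g f hker (fun w => hK w j hj) x (hx j hj)

end Extension

theorem Rs_iso_of_nilpotent_kernel_general (K M N : USM) (k : ℕ)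
    (g : USMHom K M) (f : USMHom M N)
    (hf_surj : ∀ n (y : N.M n), ∃ x : M.M n, f.f n x = y)
    (hexact : ∀ n (x : M.M n), f.f n x = 0 ↔ ∃ w : K.M n, g.f n w = x)
    (hK : K.IsNil k) :
    ∀ s < k,
      (∀ n (x : M.M n), M.NilElem s ⟨n, x⟩ →
        N.NilElem (s + 1) ⟨n, f.f n x⟩ → M.NilElem (s + 1) ⟨n, x⟩) ∧
      (∀ n (y : N.M n), N.NilElem s ⟨n, y⟩ →
        ∃ x : M.M n, M.NilElem s ⟨n, x⟩ ∧ N.NilElem (s + 1) ⟨n, f.f n x - y⟩) := by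
  intro s hs
  have hker : ∀ n (x : M.M n), f.f n x = 0 → ∃ w : K.M n, g.f n w = x :=
    fun n x => (hexact n x).mp
  refine ⟨fun n x _ hfx => nilElem_of_nilElem_map g f hker (hK.mono hs) hfx, ?_⟩
  intro n y hy
  obtain ⟨x, rfl⟩ := hf_surj n y
  refine ⟨x, nilElem_of_nilElem_map g f hker (hK.mono hs.le) hy, ?_⟩
  rw [sub_self]
  exact N.nilElem_zero (s + 1) n

/-- Proposition 1.8.  Given a short exact sequence
`0 → K → M → N → 0` of unstable modules with `K ∈ Nil_k` (`k ≥ 1`),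
for every `s < k` the natural map `R_s(M) → R_s(N)` is an isomorphism;
i.e. the induced map `M_s/M_{s+1} → N_s/N_{s+1}` is injective and surjective. -/
theorem Rs_iso_of_nilpotent_kernel (K M N : USM) (k : ℕ) (hk : 1 ≤ k)
    (g : USMHom K M) (f : USMHom M N)
    (hg_inj : ∀ n (w : K.M n), g.f n w = 0 → w = 0)
    (hf_surj : ∀ n (y : N.M n), ∃ x : M.M n, f.f n x = y)
    (hexact : ∀ n (x : M.M n), f.f n x = 0 ↔ ∃ w : K.M n, g.f n w = x)
    (hK : K.IsNil k) :
    ∀ s < k,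
      (∀ n (x : M.M n), M.NilElem s ⟨n, x⟩ →
        N.NilElem (s + 1) ⟨n, f.f n x⟩ → M.NilElem (s + 1) ⟨n, x⟩) ∧
      (∀ n (y : N.M n), N.NilElem s ⟨n, y⟩ →
        ∃ x : M.M n, M.NilElem s ⟨n, x⟩ ∧ N.NilElem (s + 1) ⟨n, f.f n x - y⟩) :=
  Rs_iso_of_nilpotent_kernel_general K M N k g f hf_surj hexact hK
end

section
/- For every n ≥ 2, Sq^{2^n} Sq^{2^n} lies in the two-sided ideal Ā(n-1) · Sq^{2^n} · Ā(n-1), where A(n-1) is the subalgebra of the mod-2 Steenrod algebra generated by Sq^1, Sq^2, …, Sq^{2^{n-1}} and Ā(n-1) is its augmentation ideal. -/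
open Finset

/-- The mod-2 Steenrod algebra, presented by generators `Sq^i` modulo
`Sq^0 = 1` and the Adem relations. -/
inductive SteenrodRel :
    FreeAlgebra (ZMod 2) ℕ → FreeAlgebra (ZMod 2) ℕ → Prop
  | sq_zero : SteenrodRel (FreeAlgebra.ι (ZMod 2) 0) 1
  | adem {a b : ℕ} (h0 : 0 < a) (h : a < 2 * b) :
      SteenrodRel (FreeAlgebra.ι (ZMod 2) a * FreeAlgebra.ι (ZMod 2) b)
        (∑ i ∈ Finset.range (a / 2 + 1),
          if Nat.choose (b - 1 - i) (a - 2 * i) % 2 = 1 then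
            FreeAlgebra.ι (ZMod 2) (a + b - i) * FreeAlgebra.ι (ZMod 2) i
          else 0)

/-- The mod-2 Steenrod algebra. -/
abbrev SteenrodAlgebra := RingQuot SteenrodRel

/-- The Steenrod square `Sq^i` as an element of the Steenrod algebra. -/
noncomputable def Sq (i : ℕ) : SteenrodAlgebra :=
  RingQuot.mkAlgHom (ZMod 2) SteenrodRel (FreeAlgebra.ι (ZMod 2) i)

/-- The augmentation ideal `Ā(n-1)` of the subalgebra `A(n-1)` generated by
`Sq^1, Sq^2, …, Sq^{2^{n-1}}`: the non-unital subalgebra generated by the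
`Sq^{2^j}`, `j ≤ n - 1`. -/
noncomputable def AbarIdeal (n : ℕ) : NonUnitalSubalgebra (ZMod 2) SteenrodAlgebra :=
  NonUnitalAlgebra.adjoin (ZMod 2) {y | ∃ j ≤ n - 1, y = Sq (2 ^ j)}

/-! For `0 < a < 2^j` the binomial coefficient `C(2^j - 1, a)` is odd (Lucas), so the Adem
relation for `Sq^a Sq^{2^j}` has leading term `Sq^{2^j + a}`:
`Sq^{2^j + a} = Sq^a Sq^{2^j} + Σ_{1 ≤ i ≤ a/2} c_i Sq^{2^j + a - i} Sq^i`.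
Induction on `a` then shows that `Ā(n-1)` contains every `Sq^k` with `0 < k < 2^n`, and that
`Sq^{2^n + h} b ∈ Ā(n-1) Sq^{2^n} Ā(n-1)` for `0 < h < 2^n` and `b ∈ Ā(n-1)`. Every term
`Sq^{2^n + (2^n - i)} Sq^i` of the Adem relation for `Sq^{2^n} Sq^{2^n}` has `0 < i`, hence is of
this form. -/

theorem Nat.choose_two_pow_sub_one_mod_two {n k : ℕ} (hk : k < 2 ^ n) :
    (2 ^ n - 1).choose k % 2 = 1 := by
  induction n generalizing k with
  | zero =>
    obtain rfl : k = 0 := by omega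
    rfl
  | succ n ih =>
    have : Fact (Nat.Prime 2) := ⟨Nat.prime_two⟩
    have hodd : 2 ^ (n + 1) - 1 = 2 * (2 ^ n - 1) + 1 := by
      have := Nat.one_le_two_pow (n := n); rw [pow_succ]; omega
    have hlow : (1 : ℕ).choose (k % 2) = 1 := by
      rcases Nat.mod_two_eq_zero_or_one k with h | h <;> simp [h]
    have lucas : (2 ^ (n + 1) - 1).choose k ≡ (2 ^ n - 1).choose (k / 2) [MOD 2] := by
      simpa [hodd, hlow, Nat.mul_add_mod, Nat.mul_add_div]
        using Choose.choose_modEq_choose_mod_mul_choose_div_nat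
          (n := 2 ^ (n + 1) - 1) (k := k) (p := 2)
    rw [lucas]
    exact ih (by rw [pow_succ] at hk; omega)

theorem Sq_zero : Sq 0 = 1 := by
  simpa [Sq] using RingQuot.mkAlgHom_rel (ZMod 2) SteenrodRel.sq_zero

theorem Sq_mul_Sq {a b : ℕ} (h0 : 0 < a) (h : a < 2 * b) :
    Sq a * Sq b = ∑ i ∈ Finset.range (a / 2 + 1),
      if (b - 1 - i).choose (a - 2 * i) % 2 = 1 then Sq (a + b - i) * Sq i else 0 := by
  simpa [Sq, apply_ite] using RingQuot.mkAlgHom_rel (ZMod 2) (SteenrodRel.adem h0 h)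

theorem Sq_two_pow_add {j a : ℕ} (h0 : 0 < a) (h : a < 2 ^ j) :
    Sq (2 ^ j + a) = Sq a * Sq (2 ^ j) - ∑ i ∈ Finset.Ico 1 (a / 2 + 1) with
      (2 ^ j - 1 - i).choose (a - 2 * i) % 2 = 1, Sq (2 ^ j + a - i) * Sq i := by
  have hlead : (2 ^ j - 1).choose a % 2 = 1 := Nat.choose_two_pow_sub_one_mod_two (by omega)
  rw [Sq_mul_Sq h0 (by omega), Finset.range_eq_Ico, Finset.sum_eq_sum_Ico_succ_bot (by omega),
    Finset.sum_filter]
  simp [hlead, Sq_zero, add_comm a]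

theorem Sq_two_pow_mem_AbarIdeal {n j : ℕ} (hj : j < n) : Sq (2 ^ j) ∈ AbarIdeal n :=
  NonUnitalAlgebra.subset_adjoin (ZMod 2) ⟨j, by omega, rfl⟩

theorem Sq_mem_AbarIdeal {n k : ℕ} (h0 : 0 < k) (hk : k < 2 ^ n) : Sq k ∈ AbarIdeal n := by
  induction k using Nat.strong_induction_on with
  | _ k ih =>
    obtain ⟨j, a, ha, rfl⟩ : ∃ j a, a < 2 ^ j ∧ k = 2 ^ j + a :=
      ⟨Nat.log 2 k, k - 2 ^ Nat.log 2 k, by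
        have := Nat.lt_pow_succ_log_self (b := 2) (by norm_num) k
        rw [pow_succ] at this; omega,
        by have := Nat.pow_log_le_self 2 h0.ne'; omega⟩
    have hjn : j < n := (Nat.pow_lt_pow_iff_right (a := 2) (by norm_num)).mp (by omega)
    rcases Nat.eq_zero_or_pos a with rfl | ha0
    · exact Sq_two_pow_mem_AbarIdeal hjn
    rw [Sq_two_pow_add ha0 ha]
    refine sub_mem (mul_mem (ih a (by omega) ha0 (by omega)) (Sq_two_pow_mem_AbarIdeal hjn))
      (sum_mem fun i hi => ?_)
    obtain ⟨hi1, hi2⟩ := Finset.mem_Ico.mp (Finset.mem_of_mem_filter i hi)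
    exact mul_mem (ih _ (by omega) (by omega) (by omega)) (ih i (by omega) (by omega) (by omega))

def AbarSqAbar (n : ℕ) : AddSubgroup SteenrodAlgebra :=
  AddSubgroup.closure {x | ∃ a ∈ AbarIdeal n, ∃ b ∈ AbarIdeal n, x = a * Sq (2 ^ n) * b}

theorem Sq_two_pow_add_mul_mem_AbarSqAbar {n h : ℕ} (h0 : 0 < h) (hn : h < 2 ^ n)
    {b : SteenrodAlgebra} (hb : b ∈ AbarIdeal n) : Sq (2 ^ n + h) * b ∈ AbarSqAbar n := by
  induction h using Nat.strong_induction_on generalizing b with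
  | _ h ih =>
    rw [Sq_two_pow_add h0 hn, sub_mul, Finset.sum_mul]
    refine sub_mem (AddSubgroup.subset_closure ⟨_, Sq_mem_AbarIdeal h0 hn, b, hb, rfl⟩)
      (sum_mem fun i hi => ?_)
    obtain ⟨hi1, hi2⟩ := Finset.mem_Ico.mp (Finset.mem_of_mem_filter i hi)
    rw [show 2 ^ n + h - i = 2 ^ n + (h - i) by omega, mul_assoc]
    exact ih (h - i) (by omega) (by omega) (by omega)
      (mul_mem (Sq_mem_AbarIdeal (by omega) (by omega)) hb)

theorem sq_sq_mem_abar_sq_abar_general (n : ℕ) :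
    Sq (2 ^ n) * Sq (2 ^ n) ∈
      AddSubgroup.closure
        {x : SteenrodAlgebra |
          ∃ a ∈ AbarIdeal n, ∃ b ∈ AbarIdeal n, x = a * Sq (2 ^ n) * b} := by
  change Sq (2 ^ n) * Sq (2 ^ n) ∈ AbarSqAbar n
  have hpos : 0 < 2 ^ n := Nat.two_pow_pos n
  rw [Sq_mul_Sq hpos (by omega)]
  refine sum_mem fun i hi => ?_
  have hi : i ≤ 2 ^ n / 2 := Nat.lt_succ_iff.mp (Finset.mem_range.mp hi)
  split_ifs with hodd
  · have hi0 : 0 < i := Nat.pos_of_ne_zero <| by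
      rintro rfl
      simp [Nat.choose_eq_zero_of_lt (Nat.sub_lt hpos one_pos)] at hodd
    rw [show 2 ^ n + 2 ^ n - i = 2 ^ n + (2 ^ n - i) by omega]
    exact Sq_two_pow_add_mul_mem_AbarSqAbar (by omega) (by omega)
      (Sq_mem_AbarIdeal hi0 (by omega))
  · exact zero_mem _

/-- Lemma 5.7.  For every `n ≥ 2`,
`Sq^{2^n} Sq^{2^n} ∈ Ā(n-1) · Sq^{2^n} · Ā(n-1)`. -/
theorem sq_sq_mem_abar_sq_abar (n : ℕ) (hn : 2 ≤ n) :
    Sq (2 ^ n) * Sq (2 ^ n) ∈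
      AddSubgroup.closure
        {x : SteenrodAlgebra |
          ∃ a ∈ AbarIdeal n, ∃ b ∈ AbarIdeal n, x = a * Sq (2 ^ n) * b} :=
  sq_sq_mem_abar_sq_abar_general n
end

section
/- In an unstable algebra over the mod-2 Steenrod algebra whose underlying module quotient by its maximal nilpotent submodule is nonzero only in degrees of the form 2^h, every element x of positive degree in the quotient satisfies: if x ≠ 0 then x³ ≠ 0 (since x⁴ = Sq_0²x ≠ 0), yet deg(x³) = 3·deg(x) is not a power of 2 — a contradiction. Hence no such unstable algebra has a nonzero positive-degree element in the quotient. -/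
theorem Nat.three_mul_ne_two_pow (m k : ℕ) : 3 * m ≠ 2 ^ k := by
  intro h
  have h3 : 3 ∣ 2 ^ k := ⟨m, h.symm⟩
  have := Nat.prime_three.dvd_of_dvd_pow h3
  omega

namespace USM

variable {A : USM}

theorem castM_eq_zero_iff {m n : ℕ} (h : m = n) (x : A.M m) : A.castM h x = 0 ↔ x = 0 := by
  subst h; rfl

-- `(x² · x) · x = (x²)²`, which is nonzero because squaring is injective.
theorem mul_sq_mul_ne_zero (mul : ∀ p q, A.M p → A.M q → A.M (p + q))
    (mul_addl : ∀ p q (x x' : A.M p) (y : A.M q),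
      mul p q (x + x') y = mul p q x y + mul p q x' y)
    (mul_assoc : ∀ p q r (x : A.M p) (y : A.M q) (z : A.M r),
      mul (p + q) r (mul p q x y) z =
        A.castM (Nat.add_assoc p q r).symm (mul p (q + r) x (mul q r y z)))
    (hred : ∀ n (x : A.M n), mul n n x x = 0 → x = 0)
    {n : ℕ} {x : A.M n} (hx : x ≠ 0) : mul (n + n) n (mul n n x x) x ≠ 0 := by
  have hx2 : mul n n x x ≠ 0 := fun h => hx (hred n x h)
  have hx4 : mul (n + n) (n + n) (mul n n x x) (mul n n x x) ≠ 0 :=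
    fun h => hx2 (hred _ _ h)
  intro hx3
  have zero_mul : mul (n + n + n) n 0 x = 0 :=
    map_zero (AddMonoidHom.mk' (fun y => mul (n + n + n) n y x) fun y y' => mul_addl _ _ y y' x)
  have h := mul_assoc (n + n) n n (mul n n x x) x x
  rw [hx3, zero_mul, eq_comm, castM_eq_zero_iff] at h
  exact hx4 h

end USM

/-- the `d = 0` case in Section 4.  Let `K` be a reduced
unstable algebra (squaring `= Sq₀` is injective) which is nonzero only in
degrees `0` and `2^h`.  Then every element of positive degree is zero:
otherwise `x ≠ 0` gives `x⁴ = (x²)² ≠ 0`, hence `x³ ≠ 0`, yet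
`deg x³ = 3 · deg x` is not a power of `2`. -/
theorem reduced_unstable_algebra_power_of_two_degrees (K : USM)
    (mul : ∀ p q, K.M p → K.M q → K.M (p + q))
    (mul_addl : ∀ p q (x x' : K.M p) (y : K.M q),
      mul p q (x + x') y = mul p q x y + mul p q x' y)
    (mul_assoc : ∀ p q r (x : K.M p) (y : K.M q) (z : K.M r),
      mul (p + q) r (mul p q x y) z =
        K.castM (by omega) (mul p (q + r) x (mul q r y z)))
    (hred : ∀ n (x : K.M n), mul n n x x = 0 → x = 0)
    (hdeg : ∀ n (x : K.M n), x ≠ 0 → n = 0 ∨ ∃ h : ℕ, n = 2 ^ h) :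
    ∀ n, 0 < n → ∀ x : K.M n, x = 0 := by
  intro n hn x
  by_contra hx
  have hx3 := USM.mul_sq_mul_ne_zero mul mul_addl mul_assoc hred hx
  obtain h0 | ⟨k, hk⟩ := hdeg _ _ hx3
  · omega
  obtain h0 | ⟨h, rfl⟩ := hdeg n x hx
  · omega
  exact Nat.three_mul_ne_two_pow (2 ^ h) k (by omega)
end
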